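/- If Y is a Σ⁰ₙ equivalence relation (n ≥ 1) and f₁, f₂ are computable functions, then the equivalence relation generated by Y together with the pairs {(f₁(x), f₂(x)) : x ∈ ℕ} is again Σ⁰ₙ. Consequently, the full subcategory Eq(Σ⁰ₙ) is closed under coequalizers. -/

import Mathlib

/-- `f` is `(R,S)`-equivalence preserving. -/
def EqvPres (R S : Setoid ℕ) (f : ℕ → ℕ) : Prop :=
  ∀ x y, R.r x y → S.r (f x) (f y)

/-- `α` is a morphism of the category `Eq` from `R` to `S`: a map on quotients
induced by a computable equivalence-preserving function. -/
def IsMor (R S : Setoid ℕ) (α : Quotient R → Quotient S) : Prop :=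
  ∃ f : ℕ → ℕ, Computable f ∧ EqvPres R S f ∧
    ∀ x, α (Quotient.mk R x) = Quotient.mk S (f x)

/-- The equivalence relation generated by a binary relation on ℕ. -/
def genSetoid (r : ℕ → ℕ → Prop) : Setoid ℕ :=
  ⟨Relation.EqvGen r, Relation.EqvGen.is_equivalence r⟩

/-- The relation generating the coequalizer: `Y` together with the pairs `(f₁ x, f₂ x)`. -/
def coeqRel (Y : Setoid ℕ) (f₁ f₂ : ℕ → ℕ) : ℕ → ℕ → Prop :=
  fun u v => Y.r u v ∨ ∃ x, u = f₁ x ∧ v = f₂ x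

/-- The Σ⁰ₙ levels of the arithmetical hierarchy for subsets of ℕ:
Σ⁰₀ = computable, and Σ⁰ₙ₊₁ = ∃-projections of Π⁰ₙ predicates. -/
def SigmaN : ℕ → (ℕ → Prop) → Prop
  | 0, p => ComputablePred p
  | n + 1, p => ∃ q : ℕ → Prop, SigmaN n (fun x => ¬ q x) ∧ ∀ x, p x ↔ ∃ y, q (Nat.pair x y)

/-- An equivalence relation is Σ⁰ₙ if its graph (coded via Cantor pairing) is Σ⁰ₙ. -/
def SigmaNRel (n : ℕ) (R : Setoid ℕ) : Prop :=
  SigmaN n fun c => R.r c.unpair.1 c.unpair.2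

/-!
Two numbers are related by the equivalence relation generated by `Y` and the pairs
`(f₁ x, f₂ x)` iff they are joined by a finite path whose steps are `Y`-steps or such pairs in
either direction. Coding the path by a single number `s`, this reads
`∃ s, (∀ i < length s, step (node i) (node (i + 1))) ∧ node (length s) = v`, where `step` is
Σ⁰ₙ and `node`, `length` are computable. For `n ≥ 1` the Σ⁰ₙ predicates are closed under `∧`, `∨`,
`∃` and computably bounded `∀`; the last because the witnesses of the finitely many instances
can be collected into one coded list.
-/

theorem Nat.exists_unpair_iff {P : ℕ → ℕ → Prop} :
    (∃ c : ℕ, P c.unpair.1 c.unpair.2) ↔ ∃ a b, P a b := by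
  rw [← Prod.exists', Nat.surjective_unpair.exists]

theorem List.forall_lt_exists_iff_exists_getD {α : Type*} (d : α) {k : ℕ} {P : ℕ → α → Prop} :
    (∀ i < k, ∃ y, P i y) ↔ ∃ l : List α, ∀ i < k, P i (l.getD i d) := by
  refine ⟨fun h => ?_, fun ⟨l, hl⟩ i hi => ⟨_, hl i hi⟩⟩
  choose w hw using h
  exact ⟨List.ofFn fun i : Fin k => w i i.2, fun i hi => by simpa [hi] using hw i hi⟩

theorem Relation.reflTransGen_iff_exists_getD {α : Type*} {r : α → α → Prop} {a b : α} (d : α) :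
    ReflTransGen r a b ↔ ∃ l : List α,
      (∀ i < l.length, r ((a :: l).getD i d) ((a :: l).getD (i + 1) d)) ∧
        (a :: l).getD l.length d = b := by
  have hchain (l : List α) : List.IsChain r (a :: l) ↔
      ∀ i < l.length, r ((a :: l).getD i d) ((a :: l).getD (i + 1) d) := by
    simp only [List.isChain_iff_getElem, List.length_cons, Nat.add_lt_add_iff_right]
    refine forall₂_congr fun i hi => ?_
    rw [List.getD_eq_getElem _ _ (by simp; omega), List.getD_eq_getElem _ _ (by simpa)]
  have hlast (l : List α) :
      (a :: l).getLast (List.cons_ne_nil a l) = (a :: l).getD l.length d := by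
    simp [List.getLast_eq_getElem]
  constructor
  · intro h
    obtain ⟨l, hl, rfl⟩ := List.exists_isChain_cons_of_relationReflTransGen h
    exact ⟨l, (hchain l).1 hl, (hlast l).symm⟩
  · rintro ⟨l, hl, rfl⟩
    exact List.relationReflTransGen_of_exists_isChain_cons l ((hchain l).2 hl) (hlast l)

namespace Computable

variable {α : Type*} [Primcodable α] {f g : α → ℕ}

theorem natPair (hf : Computable f) (hg : Computable g) :
    Computable fun a => Nat.pair (f a) (g a) :=
  Primrec₂.natPair.to_comp.comp hf hg

theorem unpair₁ (hf : Computable f) : Computable fun a => (f a).unpair.1 :=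
  fst.comp (unpair.comp hf)

theorem unpair₂ (hf : Computable f) : Computable fun a => (f a).unpair.2 :=
  snd.comp (unpair.comp hf)

end Computable

namespace ComputablePred

variable {α β : Type*} [Primcodable α] [Primcodable β]

theorem comp {p : β → Prop} {f : α → β} (hp : ComputablePred p) (hf : Computable f) :
    ComputablePred fun a => p (f a) :=
  computable_of_manyOneReducible ⟨f, hf, fun _ => Iff.rfl⟩ hp

protected theorem and {p q : α → Prop} (hp : ComputablePred p) (hq : ComputablePred q) :
    ComputablePred fun a => p a ∧ q a := by
  obtain ⟨f, hf, rfl⟩ := computable_iff.1 hp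
  obtain ⟨g, hg, rfl⟩ := computable_iff.1 hq
  exact computable_iff.2 ⟨fun a => f a && g a, Primrec.and.to_comp.comp hf hg, by simp⟩

protected theorem or {p q : α → Prop} (hp : ComputablePred p) (hq : ComputablePred q) :
    ComputablePred fun a => p a ∨ q a := by
  obtain ⟨f, hf, rfl⟩ := computable_iff.1 hp
  obtain ⟨g, hg, rfl⟩ := computable_iff.1 hq
  exact computable_iff.2 ⟨fun a => f a || g a, Primrec.or.to_comp.comp hf hg, by simp⟩

protected theorem eq [DecidableEq β] {f g : α → β} (hf : Computable f) (hg : Computable g) :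
    ComputablePred fun a => f a = g a :=
  Primrec.eq.computablePred.comp (hf.pair hg)

theorem nat_lt {f g : α → ℕ} (hf : Computable f) (hg : Computable g) :
    ComputablePred fun a => f a < g a :=
  Primrec.nat_lt.computablePred.comp (hf.pair hg)

/-- The least `i` with `i = k a ∨ p a i` is computable by unbounded search, and it lies below
`k a` exactly when some `i < k a` satisfies `p a i`. -/
theorem exists_lt {p : α → ℕ → Prop} {k : α → ℕ}
    (hp : ComputablePred fun x : α × ℕ => p x.1 x.2) (hk : Computable k) :
    ComputablePred fun a => ∃ i < k a, p a i := by
  classical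
  have hex (a : α) : ∃ i, i = k a ∨ p a i := ⟨k a, .inl rfl⟩
  have hfind := Computable.find ((ComputablePred.eq Computable.snd (hk.comp .fst)).or hp) hex
  refine (nat_lt hfind hk).of_eq fun a => ?_
  rw [Nat.find_lt_iff]
  exact exists_congr fun i => and_congr_right fun hi => or_iff_right hi.ne

theorem forall_lt {p : α → ℕ → Prop} {k : α → ℕ}
    (hp : ComputablePred fun x : α × ℕ => p x.1 x.2) (hk : Computable k) :
    ComputablePred fun a => ∀ i < k a, p a i :=
  (exists_lt (p := fun a i => ¬p a i) hp.not hk).not.of_eq fun a => by simp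

end ComputablePred

namespace SigmaN

theorem of_iff {n : ℕ} {p q : ℕ → Prop} (hp : SigmaN n p) (h : ∀ x, p x ↔ q x) : SigmaN n q :=
  (funext fun x => propext (h x) : p = q) ▸ hp

theorem comp : ∀ {n : ℕ} {p : ℕ → Prop} {g : ℕ → ℕ}, SigmaN n p → Computable g →
    SigmaN n fun x => p (g x)
  | 0, _, _, hp, hg => ComputablePred.comp hp hg
  | _ + 1, _, g, ⟨q, hq, hpq⟩, hg =>
    ⟨fun c => q (Nat.pair (g c.unpair.1) c.unpair.2),
      hq.comp ((hg.comp Computable.id.unpair₁).natPair Computable.id.unpair₂),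
      fun x => by simpa using hpq (g x)⟩

theorem succ : ∀ {n : ℕ} {p : ℕ → Prop}, SigmaN n p → SigmaN (n + 1) p
  | 0, p, hp => ⟨fun c => p c.unpair.1, hp.not.comp Computable.id.unpair₁, fun x => by simp⟩
  | _ + 1, _, ⟨q, hq, hpq⟩ => ⟨q, hq.succ, hpq⟩

theorem of_le {m n : ℕ} {p : ℕ → Prop} (h : m ≤ n) (hp : SigmaN m p) : SigmaN n p := by
  induction h with
  | refl => exact hp
  | step _ ih => exact ih.succ

theorem of_computablePred {p : ℕ → Prop} (hp : ComputablePred p) (n : ℕ) : SigmaN n p :=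
  of_le n.zero_le hp

mutual

protected theorem and : ∀ {n : ℕ} {p q : ℕ → Prop}, SigmaN n p → SigmaN n q →
    SigmaN n fun x => p x ∧ q x
  | 0, _, _, hp, hq => ComputablePred.and hp hq
  | _ + 1, _, _, ⟨p', hp', hpp'⟩, ⟨q', hq', hqq'⟩ => by
    have hid := Computable.id (α := ℕ)
    refine ⟨fun c => p' (Nat.pair c.unpair.1 c.unpair.2.unpair.1) ∧
        q' (Nat.pair c.unpair.1 c.unpair.2.unpair.2), ?_, fun x => ?_⟩
    · exact (SigmaN.or (hp'.comp (hid.unpair₁.natPair hid.unpair₂.unpair₁))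
        (hq'.comp (hid.unpair₁.natPair hid.unpair₂.unpair₂))).of_iff fun _ => not_and_or.symm
    · simp only [Nat.unpair_pair]
      exact ((hpp' x).and (hqq' x)).trans
        (exists_and_exists_comm.trans Nat.exists_unpair_iff.symm)

protected theorem or : ∀ {n : ℕ} {p q : ℕ → Prop}, SigmaN n p → SigmaN n q →
    SigmaN n fun x => p x ∨ q x
  | 0, _, _, hp, hq => ComputablePred.or hp hq
  | _ + 1, _, _, ⟨p', hp', hpp'⟩, ⟨q', hq', hqq'⟩ =>
    ⟨fun c => p' c ∨ q' c, (SigmaN.and hp' hq').of_iff fun _ => not_or.symm,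
      fun x => by simp [hpp', hqq', exists_or]⟩

end

end SigmaN

def SigmaN₂ (n : ℕ) (r : ℕ → ℕ → Prop) : Prop :=
  SigmaN n fun c => r c.unpair.1 c.unpair.2

namespace SigmaN₂

theorem comp₂ {n : ℕ} {r : ℕ → ℕ → Prop} {f g : ℕ → ℕ} (hr : SigmaN₂ n r)
    (hf : Computable f) (hg : Computable g) : SigmaN n fun x => r (f x) (g x) :=
  (SigmaN.comp hr (hf.natPair hg)).of_iff fun x => by simp

theorem exists_matrix {n : ℕ} {p : ℕ → ℕ → Prop} (hp : SigmaN₂ (n + 1) p) :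
    ∃ q : ℕ → Prop, SigmaN n (fun x => ¬q x) ∧
      ∀ c i, p c i ↔ ∃ z, q (Nat.pair (Nat.pair c i) z) := by
  obtain ⟨q, hq, hpq⟩ := hp
  exact ⟨q, hq, fun c i => by simpa using hpq (Nat.pair c i)⟩

theorem computablePred {p : ℕ → ℕ → Prop} (hp : SigmaN₂ 0 p) :
    ComputablePred fun x : ℕ × ℕ => p x.1 x.2 :=
  (ComputablePred.comp hp (Computable.fst.natPair .snd)).of_eq fun x => by simp

end SigmaN₂

namespace SigmaN

theorem exists_nat {n : ℕ} {p : ℕ → ℕ → Prop} (hp : SigmaN₂ (n + 1) p) :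
    SigmaN (n + 1) fun c => ∃ y, p c y := by
  obtain ⟨q, hq, hpq⟩ := hp.exists_matrix
  have hid := Computable.id (α := ℕ)
  refine ⟨fun w => q (Nat.pair (Nat.pair w.unpair.1 w.unpair.2.unpair.1) w.unpair.2.unpair.2),
    hq.comp ((hid.unpair₁.natPair hid.unpair₂.unpair₁).natPair hid.unpair₂.unpair₂), fun c => ?_⟩
  simp only [Nat.unpair_pair]
  exact (exists_congr fun y => hpq c y).trans Nat.exists_unpair_iff.symm

theorem exists_lt : ∀ {n : ℕ} {p : ℕ → ℕ → Prop} {k : ℕ → ℕ}, SigmaN₂ n p → Computable k →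
    SigmaN n fun c => ∃ i < k c, p c i
  | 0, _, _, hp, hk => ComputablePred.exists_lt hp.computablePred hk
  | n + 1, _, k, hp, hk => by
    obtain ⟨q, hq, hpq⟩ := hp.exists_matrix
    have hid := Computable.id (α := ℕ)
    refine ⟨fun w => w.unpair.2.unpair.1 < k w.unpair.1 ∧
        q (Nat.pair (Nat.pair w.unpair.1 w.unpair.2.unpair.1) w.unpair.2.unpair.2),
      ?_, fun c => ?_⟩
    · have hlt := ComputablePred.nat_lt hid.unpair₂.unpair₁ (hk.comp hid.unpair₁)
      exact ((of_computablePred hlt.not n).or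
        (hq.comp ((hid.unpair₁.natPair hid.unpair₂.unpair₁).natPair hid.unpair₂.unpair₂))).of_iff
        fun _ => not_and_or.symm
    · simp only [Nat.unpair_pair]
      exact (exists_congr fun i => (and_congr_right fun _ => hpq c i).trans
        exists_and_left.symm).trans Nat.exists_unpair_iff.symm

theorem forall_lt : ∀ {n : ℕ} {p : ℕ → ℕ → Prop} {k : ℕ → ℕ}, SigmaN₂ n p → Computable k →
    SigmaN n fun c => ∀ i < k c, p c i
  | 0, _, _, hp, hk => ComputablePred.forall_lt hp.computablePred hk
  | n + 1, _, k, hp, hk => by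
    obtain ⟨q, hq, hpq⟩ := hp.exists_matrix
    have hid := Computable.id (α := ℕ)
    have hwitness : Computable fun e : ℕ =>
        (Denumerable.ofNat (List ℕ) e.unpair.1.unpair.2).getD e.unpair.2 0 :=
      (Primrec.list_getD 0).to_comp.comp
        ((Primrec.ofNat _).to_comp.comp hid.unpair₁.unpair₂) hid.unpair₂
    refine ⟨fun w => ∀ i < k w.unpair.1,
        q (Nat.pair (Nat.pair w.unpair.1 i) ((Denumerable.ofNat (List ℕ) w.unpair.2).getD i 0)),
      ?_, fun c => ?_⟩
    · exact (exists_lt (p := fun w i => ¬q (Nat.pair (Nat.pair w.unpair.1 i)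
          ((Denumerable.ofNat (List ℕ) w.unpair.2).getD i 0)))
        (hq.comp ((hid.unpair₁.unpair₁.natPair hid.unpair₂).natPair hwitness))
        (hk.comp hid.unpair₁)).of_iff fun _ => by simp
    · simp only [Nat.unpair_pair]
      exact (forall₂_congr fun i _ => hpq c i).trans
        ((List.forall_lt_exists_iff_exists_getD 0).trans
          (Denumerable.eqv (List ℕ)).symm.surjective.exists)

end SigmaN

/-- The vertex at position `i` of the path that starts at `a` and continues with the list coded
by `s`. -/
def pathNode (a s i : ℕ) : ℕ :=
  (a :: Denumerable.ofNat (List ℕ) s).getD i 0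

def pathLength (s : ℕ) : ℕ :=
  (Denumerable.ofNat (List ℕ) s).length

theorem computable_pathNode {α : Type*} [Primcodable α] {a s i : α → ℕ} (ha : Computable a)
    (hs : Computable s) (hi : Computable i) : Computable fun x => pathNode (a x) (s x) (i x) :=
  (Primrec.list_getD 0).to_comp.comp
    (Computable.list_cons.comp ha ((Primrec.ofNat _).to_comp.comp hs)) hi

theorem computable_pathLength : Computable pathLength :=
  (Primrec.list_length.comp (Primrec.ofNat _)).to_comp

theorem reflTransGen_iff_exists_path {r : ℕ → ℕ → Prop} {a b : ℕ} :
    Relation.ReflTransGen r a b ↔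
      ∃ s, (∀ i < pathLength s, r (pathNode a s i) (pathNode a s (i + 1))) ∧
        pathNode a s (pathLength s) = b :=
  (Relation.reflTransGen_iff_exists_getD 0).trans (Denumerable.eqv (List ℕ)).symm.surjective.exists

namespace SigmaN₂

variable {n : ℕ} {r : ℕ → ℕ → Prop}

theorem symmGen (hr : SigmaN₂ n r) : SigmaN₂ n (Relation.SymmGen r) :=
  SigmaN.or hr (hr.comp₂ Computable.id.unpair₂ Computable.id.unpair₁)

theorem reflTransGen (hr : SigmaN₂ (n + 1) r) : SigmaN₂ (n + 1) (Relation.ReflTransGen r) := by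
  have hid := Computable.id (α := ℕ)
  have hsteps := SigmaN.forall_lt (p := fun d i => r (pathNode d.unpair.1.unpair.1 d.unpair.2 i)
      (pathNode d.unpair.1.unpair.1 d.unpair.2 (i + 1)))
    (hr.comp₂ (computable_pathNode hid.unpair₁.unpair₁.unpair₁ hid.unpair₁.unpair₂ hid.unpair₂)
      (computable_pathNode hid.unpair₁.unpair₁.unpair₁ hid.unpair₁.unpair₂
        (Primrec.succ.to_comp.comp hid.unpair₂)))
    (computable_pathLength.comp hid.unpair₂)
  have hend := ComputablePred.eq (computable_pathNode hid.unpair₁.unpair₁ hid.unpair₂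
    (computable_pathLength.comp hid.unpair₂)) hid.unpair₁.unpair₂
  have hpath : SigmaN₂ (n + 1) fun c s =>
      (∀ i < pathLength s, r (pathNode c.unpair.1 s i) (pathNode c.unpair.1 s (i + 1))) ∧
        pathNode c.unpair.1 s (pathLength s) = c.unpair.2 :=
    hsteps.and (SigmaN.of_computablePred hend _)
  exact (SigmaN.exists_nat hpath).of_iff fun _ => reflTransGen_iff_exists_path.symm

end SigmaN₂

theorem sigmaN₂_range_pair {f₁ f₂ : ℕ → ℕ} (hf₁ : Computable f₁) (hf₂ : Computable f₂) :
    SigmaN₂ 1 fun u v => ∃ x, u = f₁ x ∧ v = f₂ x :=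
  SigmaN.exists_nat (p := fun c x => c.unpair.1 = f₁ x ∧ c.unpair.2 = f₂ x)
    (SigmaN.of_computablePred (ComputablePred.and
      (ComputablePred.eq Computable.id.unpair₁.unpair₁ (hf₁.comp Computable.id.unpair₂))
      (ComputablePred.eq Computable.id.unpair₁.unpair₂ (hf₂.comp Computable.id.unpair₂))) 1)

/-- For `n ≥ 1`, the equivalence relation generated by a Σ⁰ₙ equivalence relation `Y`
and the pairs `(f₁ x, f₂ x)` for computable `f₁, f₂` is again Σ⁰ₙ; hence `Eq(Σ⁰ₙ)`
is closed under coequalizers. -/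
theorem stmt_12 (n : ℕ) (hn : 1 ≤ n) (Y : Setoid ℕ) (hY : SigmaNRel n Y)
    (f₁ f₂ : ℕ → ℕ) (hf₁ : Computable f₁) (hf₂ : Computable f₂) :
    SigmaNRel n (genSetoid (coeqRel Y f₁ f₂)) := by
  obtain ⟨m, rfl⟩ := Nat.exists_eq_add_of_le' hn
  have hcoeq : SigmaN₂ (m + 1) (coeqRel Y f₁ f₂) :=
    SigmaN.or hY ((sigmaN₂_range_pair hf₁ hf₂).of_le hn)
  show SigmaN₂ (m + 1) (Relation.EqvGen _)
  rw [← Relation.EqvGen.reflTransGen_symmGen]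
  exact hcoeq.symmGen.reflTransGen
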